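/- arXiv:2005.04480 — 4 statements merged into one kernel-verified Lean document; each statement's English description precedes it below -/
import Mathlib

section
/- Let m, g, Crr, CdA, ρ > 0, let λ ∈ [0, 1), and let θ ∈ (−π/2, π/2) satisfy Crr·cos θ + sin θ ≥ 0. Let 0 ≤ w₁ < w₂ be two headwind values and let V₁, V₂ > 0 be speeds such that the required powers are equal: (m·g·sin θ + Crr·m·g·cos θ + (1/2)·CdA·ρ·(V₁ + w₁)²)·V₁/(1 − λ) = (m·g·sin θ + Crr·m·g·cos θ + (1/2)·CdA·ρ·(V₂ + w₂)²)·V₂/(1 − λ). Then V₂ < V₁: at constant power, a stronger headwind results in a lower speed. -/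
/-! At equal power, suppose the second rider were at least as fast, `V₁ ≤ V₂`. The airspeed
`V + w` would then be strictly larger, so the total resistance, a nonnegative constant plus a
positive multiple of the squared airspeed, would be strictly larger too, and so would its product
with the (larger) ground speed, which is the power. -/

theorem add_mul_sq_mul_lt_add_mul_sq_mul {A k a₁ a₂ V₁ V₂ : ℝ} (hA : 0 ≤ A) (hk : 0 < k)
    (ha₁ : 0 ≤ a₁) (ha : a₁ < a₂) (hV₁ : 0 < V₁) (hV : V₁ ≤ V₂) :
    (A + k * a₁ ^ 2) * V₁ < (A + k * a₂ ^ 2) * V₂ :=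
  calc (A + k * a₁ ^ 2) * V₁ < (A + k * a₂ ^ 2) * V₁ := by gcongr
    _ ≤ (A + k * a₂ ^ 2) * V₂ := by gcongr

theorem gravity_add_rolling_resistance_nonneg {m g Crr θ : ℝ} (hm : 0 < m) (hg : 0 < g)
    (hres : 0 ≤ Crr * Real.cos θ + Real.sin θ) :
    0 ≤ m * g * Real.sin θ + Crr * m * g * Real.cos θ :=
  calc 0 ≤ m * g * (Crr * Real.cos θ + Real.sin θ) := by positivity
    _ = m * g * Real.sin θ + Crr * m * g * Real.cos θ := by ring

theorem stronger_headwind_lower_speed_general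
    (m g Crr CdA ρ lam θ : ℝ)
    (hm : 0 < m) (hg : 0 < g) (hCdA : 0 < CdA) (hρ : 0 < ρ)
    (hlam : lam ∈ Set.Ico (0 : ℝ) 1)
    (hres : 0 ≤ Crr * Real.cos θ + Real.sin θ)
    (w₁ w₂ : ℝ) (hw₁ : 0 ≤ w₁) (hw : w₁ < w₂)
    (V₁ V₂ : ℝ) (hV₁ : 0 < V₁)
    (hP : (m * g * Real.sin θ + Crr * m * g * Real.cos θ
            + (1 / 2) * CdA * ρ * (V₁ + w₁) ^ 2) * V₁ / (1 - lam)
        = (m * g * Real.sin θ + Crr * m * g * Real.cos θ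
            + (1 / 2) * CdA * ρ * (V₂ + w₂) ^ 2) * V₂ / (1 - lam)) :
    V₂ < V₁ := by
  by_contra! hV
  have hP' := (div_left_inj' (sub_ne_zero.2 hlam.2.ne')).1 hP
  refine hP'.not_lt (add_mul_sq_mul_lt_add_mul_sq_mul
    (gravity_add_rolling_resistance_nonneg hm hg hres) (by positivity) ?_ ?_ hV₁ hV) <;>
    linarith

/-- At constant power, a stronger headwind results in a lower speed: if
`0 ≤ w₁ < w₂` and `V₁, V₂ > 0` give equal required powers, then `V₂ < V₁`. -/
theorem stronger_headwind_lower_speed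
    (m g Crr CdA ρ lam θ : ℝ)
    (hm : 0 < m) (hg : 0 < g) (hCrr : 0 < Crr) (hCdA : 0 < CdA) (hρ : 0 < ρ)
    (hlam : lam ∈ Set.Ico (0 : ℝ) 1)
    (hθ : θ ∈ Set.Ioo (-(Real.pi / 2)) (Real.pi / 2))
    (hres : 0 ≤ Crr * Real.cos θ + Real.sin θ)
    (w₁ w₂ : ℝ) (hw₁ : 0 ≤ w₁) (hw : w₁ < w₂)
    (V₁ V₂ : ℝ) (hV₁ : 0 < V₁) (hV₂ : 0 < V₂)
    (hP : (m * g * Real.sin θ + Crr * m * g * Real.cos θ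
            + (1 / 2) * CdA * ρ * (V₁ + w₁) ^ 2) * V₁ / (1 - lam)
        = (m * g * Real.sin θ + Crr * m * g * Real.cos θ
            + (1 / 2) * CdA * ρ * (V₂ + w₂) ^ 2) * V₂ / (1 - lam)) :
    V₂ < V₁ :=
  stronger_headwind_lower_speed_general m g Crr CdA ρ lam θ hm hg hCdA hρ hlam hres w₁ w₂ hw₁ hw V₁
    V₂ hV₁ hP
end

section
/- Let m, g, Crr, CdA, ρ > 0, let λ ∈ [0, 1), let w ≥ 0, and let θ₁ < θ₂ be slope angles in (−π/2, π/2) such that cos θ − Crr·sin θ > 0 for all θ ∈ [θ₁, θ₂] and Crr·cos θ₁ + sin θ₁ ≥ 0. Let V₁, V₂ > 0 be speeds such that the required powers are equal: (m·g·sin θ₁ + Crr·m·g·cos θ₁ + (1/2)·CdA·ρ·(V₁ + w)²)·V₁/(1 − λ) = (m·g·sin θ₂ + Crr·m·g·cos θ₂ + (1/2)·CdA·ρ·(V₂ + w)²)·V₂/(1 − λ). Then V₂ < V₁: at constant power, a steeper slope results in a lower speed. -/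
/-!
The derivative of `sin θ + Crr cos θ` is `cos θ - Crr sin θ > 0` on `[θ₁, θ₂]`, so the combined
grade and rolling resistance `m g (sin θ + Crr cos θ)` is strictly larger at `θ₂` than at `θ₁`,
where it is nonnegative. The power `(a + k (V + w)²) V` is strictly increasing in a resistance
`a ≥ 0` and nondecreasing in the speed `V > 0`, so `V₂ ≥ V₁` would force a strictly larger power
on the steeper slope.
-/

open Real Set

theorem strictMonoOn_sin_add_mul_cos {c : ℝ} {D : Set ℝ} (hD : Convex ℝ D)
    (h : ∀ θ ∈ interior D, 0 < cos θ - c * sin θ) :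
    StrictMonoOn (fun θ => sin θ + c * cos θ) D := by
  have hderiv : ∀ θ, HasDerivAt (fun θ => sin θ + c * cos θ) (cos θ - c * sin θ) θ := by
    intro θ
    have := (hasDerivAt_sin θ).add ((hasDerivAt_cos θ).const_mul c)
    rwa [mul_neg, ← sub_eq_add_neg] at this
  refine strictMonoOn_of_deriv_pos hD (by fun_prop) fun θ hθ => ?_
  rw [(hderiv θ).deriv]
  exact h θ hθ

/-- `a` is the speed-independent resistance `m g (sin θ + Crr cos θ)` and `k = CdA ρ / 2`. -/
def resistivePower (a k w V : ℝ) : ℝ := (a + k * (V + w) ^ 2) * V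

theorem resistivePower_lt_resistivePower {a₁ a₂ k w V₁ V₂ : ℝ} (hk : 0 ≤ k) (hw : 0 ≤ w)
    (ha₁ : 0 ≤ a₁) (ha : a₁ < a₂) (hV₁ : 0 < V₁) (hV : V₁ ≤ V₂) :
    resistivePower a₁ k w V₁ < resistivePower a₂ k w V₂ := by
  have hdrag : k * (V₁ + w) ^ 2 ≤ k * (V₂ + w) ^ 2 := by gcongr
  calc (a₁ + k * (V₁ + w) ^ 2) * V₁
      < (a₂ + k * (V₂ + w) ^ 2) * V₁ := mul_lt_mul_of_pos_right (by linarith) hV₁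
    _ ≤ (a₂ + k * (V₂ + w) ^ 2) * V₂ := by
      have hdrag₂ : 0 ≤ k * (V₂ + w) ^ 2 := by positivity
      exact mul_le_mul_of_nonneg_left hV (by linarith)

theorem steeper_slope_lower_speed_general
    (m g Crr CdA ρ lam w : ℝ)
    (hm : 0 < m) (hg : 0 < g) (hCdA : 0 < CdA) (hρ : 0 < ρ)
    (hlam : lam ∈ Set.Ico (0 : ℝ) 1) (hw : 0 ≤ w)
    (θ₁ θ₂ : ℝ) (hθlt : θ₁ < θ₂)
    (hmono : ∀ θ ∈ Set.Icc θ₁ θ₂, 0 < Real.cos θ - Crr * Real.sin θ)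
    (hres : 0 ≤ Crr * Real.cos θ₁ + Real.sin θ₁)
    (V₁ V₂ : ℝ) (hV₁ : 0 < V₁)
    (hP : (m * g * Real.sin θ₁ + Crr * m * g * Real.cos θ₁
            + (1 / 2) * CdA * ρ * (V₁ + w) ^ 2) * V₁ / (1 - lam)
        = (m * g * Real.sin θ₂ + Crr * m * g * Real.cos θ₂
            + (1 / 2) * CdA * ρ * (V₂ + w) ^ 2) * V₂ / (1 - lam)) :
    V₂ < V₁ := by
  by_contra! hV
  have hslope : sin θ₁ + Crr * cos θ₁ < sin θ₂ + Crr * cos θ₂ :=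
    strictMonoOn_sin_add_mul_cos (convex_Icc θ₁ θ₂) (fun θ hθ => hmono θ (interior_subset hθ))
      (left_mem_Icc.2 hθlt.le) (right_mem_Icc.2 hθlt.le) hθlt
  have hmg : 0 < m * g := mul_pos hm hg
  have hpower := resistivePower_lt_resistivePower (k := (1 / 2) * CdA * ρ) (by positivity) hw
    (mul_nonneg hmg.le (by linarith : 0 ≤ sin θ₁ + Crr * cos θ₁))
    (mul_lt_mul_of_pos_left hslope hmg) hV₁ hV
  have hlam1 : 1 - lam ≠ 0 := by linarith [hlam.2]
  rw [div_left_inj' hlam1] at hP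
  exact hpower.ne (by unfold resistivePower; linear_combination hP)

/-- At constant power, a steeper slope results in a lower speed: if
`θ₁ < θ₂` are slope angles in `(-π/2, π/2)` with `cos θ - Crr sin θ > 0` on
`[θ₁, θ₂]` and `Crr cos θ₁ + sin θ₁ ≥ 0`, and `V₁, V₂ > 0` give equal required
powers, then `V₂ < V₁`. -/
theorem steeper_slope_lower_speed
    (m g Crr CdA ρ lam w : ℝ)
    (hm : 0 < m) (hg : 0 < g) (hCrr : 0 < Crr) (hCdA : 0 < CdA) (hρ : 0 < ρ)
    (hlam : lam ∈ Set.Ico (0 : ℝ) 1) (hw : 0 ≤ w)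
    (θ₁ θ₂ : ℝ) (hθlt : θ₁ < θ₂)
    (hθ₁ : θ₁ ∈ Set.Ioo (-(Real.pi / 2)) (Real.pi / 2))
    (hθ₂ : θ₂ ∈ Set.Ioo (-(Real.pi / 2)) (Real.pi / 2))
    (hmono : ∀ θ ∈ Set.Icc θ₁ θ₂, 0 < Real.cos θ - Crr * Real.sin θ)
    (hres : 0 ≤ Crr * Real.cos θ₁ + Real.sin θ₁)
    (V₁ V₂ : ℝ) (hV₁ : 0 < V₁) (hV₂ : 0 < V₂)
    (hP : (m * g * Real.sin θ₁ + Crr * m * g * Real.cos θ₁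
            + (1 / 2) * CdA * ρ * (V₁ + w) ^ 2) * V₁ / (1 - lam)
        = (m * g * Real.sin θ₂ + Crr * m * g * Real.cos θ₂
            + (1 / 2) * CdA * ρ * (V₂ + w) ^ 2) * V₂ / (1 - lam)) :
    V₂ < V₁ :=
  steeper_slope_lower_speed_general m g Crr CdA ρ lam w hm hg hCdA hρ hlam hw θ₁ θ₂ hθlt hmono hres
    V₁ V₂ hV₁ hP
end

section
/- Let V̄ > 0, w > 0, and let V_U, V_D > 0 satisfy the total-work constraint (V_U + w)² + (V_D − w)² = 2·V̄². Then the average speed satisfies 2·V_U·V_D/(V_U + V_D) < V̄: under a constraint of fixed total work, riding with the wind does not compensate for the speed lost by riding against the wind. -/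
/-! The constraint says that `V_U + w` and `V_D - w` have quadratic mean `V̄`, so their
arithmetic mean `(V_U + V_D) / 2` is at most `V̄`; and the harmonic mean of `V_U`, `V_D` is at
most their arithmetic mean. Both inequalities are equalities only if `V_U = V_D` and
`V_U + w = V_D - w`, which is impossible for `w > 0`. -/

section Means

variable {K : Type*} [Field K] [LinearOrder K] [IsStrictOrderedRing K]

lemma two_mul_mul_div_add_le_add_div_two {a b : K} (hab : 0 < a + b) :
    2 * a * b / (a + b) ≤ (a + b) / 2 := by
  rw [div_le_div_iff₀ hab two_pos]
  nlinarith [sq_nonneg (a - b)]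

lemma two_mul_mul_div_add_lt_add_div_two {a b : K} (hab : 0 < a + b) (hne : a ≠ b) :
    2 * a * b / (a + b) < (a + b) / 2 := by
  rw [div_lt_div_iff₀ hab two_pos]
  nlinarith [sq_pos_of_ne_zero (sub_ne_zero.2 hne)]

lemma add_div_two_le_of_sq_add_sq_eq {x y c : K} (hc : 0 ≤ c)
    (h : x ^ 2 + y ^ 2 = 2 * c ^ 2) : (x + y) / 2 ≤ c := by
  nlinarith [sq_nonneg (x - y)]

lemma add_div_two_lt_of_sq_add_sq_eq {x y c : K} (hc : 0 ≤ c)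
    (h : x ^ 2 + y ^ 2 = 2 * c ^ 2) (hne : x ≠ y) : (x + y) / 2 < c := by
  nlinarith [sq_pos_of_ne_zero (sub_ne_zero.2 hne)]

end Means

/-- Under the total-work constraint `(V_U + w)² + (V_D - w)² = 2 V̄²` with
`w > 0`, the average speed `2 V_U V_D / (V_U + V_D)` is strictly less than the
windless speed `V̄`: riding with the wind does not compensate for the speed
lost by riding against the wind. -/
theorem work_constraint_average_speed_lt
    (Vbar w VU VD : ℝ) (hVbar : 0 < Vbar) (hw : 0 < w)
    (hVU : 0 < VU) (hVD : 0 < VD)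
    (hwork : (VU + w) ^ 2 + (VD - w) ^ 2 = 2 * Vbar ^ 2) :
    2 * VU * VD / (VU + VD) < Vbar := by
  have hsum : 0 < VU + VD := add_pos hVU hVD
  have hmean : (VU + w + (VD - w)) / 2 = (VU + VD) / 2 := by ring
  rcases eq_or_ne VU VD with rfl | hne
  · have hne' : VU + w ≠ VU - w := by linarith
    calc 2 * VU * VU / (VU + VU) ≤ (VU + VU) / 2 := two_mul_mul_div_add_le_add_div_two hsum
      _ < Vbar := hmean ▸ add_div_two_lt_of_sq_add_sq_eq hVbar.le hwork hne'
  · calc 2 * VU * VD / (VU + VD) < (VU + VD) / 2 := two_mul_mul_div_add_lt_add_div_two hsum hne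
      _ ≤ Vbar := hmean ▸ add_div_two_le_of_sq_add_sq_eq hVbar.le hwork
end

section
/- Let c ≥ 0, k > 0, w > 0, and V̄ > 0, and set P₀ = (c + k·V̄²)·V̄. Suppose V_U > 0 satisfies (c + k·(V_U + w)²)·V_U = P₀ and V_D > w satisfies (c + k·(V_D − w)²)·V_D = P₀. Then the average speed satisfies 2·V_U·V_D/(V_U + V_D) < V̄: under a constraint of constant power equal to the windless power, riding with the wind does not compensate for the speed lost by riding against the wind. -/
/-!
Write `A = V_U + w` and `B = V_D - w` for the air speeds. Each half takes energy `c + k·(air speed)²`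
per unit distance, so the claim amounts to `A² + B² > 2·V̄²`. A rider of power `P` has air speed
`√u` against the headwind `χ u = √u - P / (c + k u)`, a strictly concave increasing function of `u`,
and `χ (A²) = w`, `χ (B²) = -w`, `χ (V̄²) = 0`. Strict concavity gives
`χ ((A² + B²) / 2) > (χ (A²) + χ (B²)) / 2 = χ (V̄²)`, and monotonicity gives `(A² + B²) / 2 > V̄²`.
-/

open Set

lemma StrictConcaveOn.lt_midpoint_of_add_eq_two_mul {s : Set ℝ} {f : ℝ → ℝ} {a b m : ℝ}
    (hf : StrictConcaveOn ℝ s f) (hmono : MonotoneOn f s) (ha : a ∈ s) (hb : b ∈ s)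
    (hm : m ∈ s) (hab : a ≠ b) (hsum : f a + f b = 2 * f m) : m < (a + b) / 2 := by
  have hhalf : (1 / 2 : ℝ) + 1 / 2 = 1 := by norm_num
  have hmid : (1 / 2 : ℝ) • a + (1 / 2 : ℝ) • b = (a + b) / 2 := by
    simp only [smul_eq_mul]; ring
  have hconc := hf.2 ha hb hab one_half_pos one_half_pos hhalf
  have hmid_mem := hf.1 ha hb one_half_pos.le one_half_pos.le hhalf
  rw [hmid] at hconc hmid_mem
  by_contra! hle
  have := hmono hmid_mem hm hle
  simp only [smul_eq_mul] at hconc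
  linarith

/-- The headwind against which a rider of power `P` has air speed `√u`: the ground speed is then
`√u - w`, and `(c + k u) (√u - w) = P`. -/
noncomputable def headwindOfSqAirSpeed (c k P u : ℝ) : ℝ := √u - P / (c + k * u)

section headwind

variable {c k P : ℝ}

lemma headwindOfSqAirSpeed_sq {A w : ℝ} (hA : 0 ≤ A) (hpos : c + k * A ^ 2 ≠ 0)
    (h : (c + k * A ^ 2) * (A - w) = P) : headwindOfSqAirSpeed c k P (A ^ 2) = w := by
  rw [headwindOfSqAirSpeed, Real.sqrt_sq hA, ← h, mul_div_cancel_left₀ _ hpos]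
  ring

lemma convexOn_div_add_mul (hc : 0 ≤ c) (hk : 0 < k) (hP : 0 ≤ P) :
    ConvexOn ℝ (Ioi 0) fun u => P / (c + k * u) := by
  have hinv := ((convexOn_zpow (𝕜 := ℝ) (-1)).translate_right c).comp_linearMap
    (k • LinearMap.id : ℝ →ₗ[ℝ] ℝ)
  have hsub : Ioi (0 : ℝ) ⊆ _ := fun u hu =>
    show 0 < c + k * u from add_pos_of_nonneg_of_pos hc (mul_pos hk hu)
  refine ((hinv.subset hsub (convex_Ioi 0)).smul hP).congr fun u _ => ?_
  change P * (c + k * u) ^ (-1 : ℤ) = P / (c + k * u)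
  rw [zpow_neg_one, div_eq_mul_inv]

lemma strictConcaveOn_headwindOfSqAirSpeed (hc : 0 ≤ c) (hk : 0 < k) (hP : 0 ≤ P) :
    StrictConcaveOn ℝ (Ioi 0) (headwindOfSqAirSpeed c k P) :=
  (Real.strictConcaveOn_sqrt.subset Ioi_subset_Ici_self (convex_Ioi 0)).add_concaveOn
    (convexOn_div_add_mul hc hk hP).neg

lemma monotoneOn_headwindOfSqAirSpeed (hc : 0 ≤ c) (hk : 0 < k) (hP : 0 ≤ P) :
    MonotoneOn (headwindOfSqAirSpeed c k P) (Ioi 0) := by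
  intro u hu v _ huv
  exact sub_le_sub (Real.sqrt_le_sqrt huv)
    (div_le_div_of_nonneg_left hP (add_pos_of_nonneg_of_pos hc (mul_pos hk hu)) (by gcongr))

end headwind

lemma harmonic_mean_lt_of_two_mul_sq_lt {c k P A B VU VD V : ℝ} (hk : 0 < k) (hP : 0 < P)
    (hVU : 0 < VU) (hVD : 0 < VD) (hV : 0 < V) (hU : (c + k * A ^ 2) * VU = P)
    (hD : (c + k * B ^ 2) * VD = P) (h0 : (c + k * V ^ 2) * V = P)
    (hsq : 2 * V ^ 2 < A ^ 2 + B ^ 2) : 2 * VU * VD / (VU + VD) < V := by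
  rw [div_lt_iff₀ (by positivity)]
  refine lt_of_mul_lt_mul_left ?_ hP.le
  calc P * (2 * VU * VD) = 2 * (c + k * V ^ 2) * (V * VU * VD) := by rw [← h0]; ring
    _ < (2 * c + k * (A ^ 2 + B ^ 2)) * (V * VU * VD) := by
        gcongr
        linarith [mul_lt_mul_of_pos_left hsq hk]
    _ = P * (V * (VU + VD)) := by linear_combination (V * VD) * hU + (V * VU) * hD

/-- Under the constant-power constraint: with `c ≥ 0`, `k > 0`, `w > 0`,
`V̄ > 0` and `P₀ = (c + k V̄²) V̄`, if `V_U > 0` satisfies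
`(c + k (V_U + w)²) V_U = P₀` and `V_D > w` satisfies
`(c + k (V_D - w)²) V_D = P₀`, then the average speed
`2 V_U V_D / (V_U + V_D)` is strictly less than `V̄`: riding with the wind
does not compensate for the speed lost by riding against the wind. -/
theorem power_constraint_average_speed_lt
    (c k w Vbar VU VD : ℝ) (hc : 0 ≤ c) (hk : 0 < k) (hw : 0 < w)
    (hVbar : 0 < Vbar) (hVU : 0 < VU) (hVD : w < VD)
    (hU : (c + k * (VU + w) ^ 2) * VU = (c + k * Vbar ^ 2) * Vbar)
    (hD : (c + k * (VD - w) ^ 2) * VD = (c + k * Vbar ^ 2) * Vbar) :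
    2 * VU * VD / (VU + VD) < Vbar := by
  have hVD0 : 0 < VD := hw.trans hVD
  set P := (c + k * Vbar ^ 2) * Vbar
  have hP : 0 < P := by positivity
  have hB2 : 0 < (VD - w) ^ 2 := pow_pos (sub_pos.2 hVD) 2
  have hχU : headwindOfSqAirSpeed c k P ((VU + w) ^ 2) = w :=
    headwindOfSqAirSpeed_sq (by positivity) (by positivity) (by rwa [add_sub_cancel_right])
  have hχD : headwindOfSqAirSpeed c k P ((VD - w) ^ 2) = -w :=
    headwindOfSqAirSpeed_sq (by linarith) (by positivity) (by rwa [sub_neg_eq_add, sub_add_cancel])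
  have hχ0 : headwindOfSqAirSpeed c k P (Vbar ^ 2) = 0 :=
    headwindOfSqAirSpeed_sq hVbar.le (by positivity) (by rw [sub_zero])
  have hne : (VU + w) ^ 2 ≠ (VD - w) ^ 2 := fun h => by
    have := congrArg (headwindOfSqAirSpeed c k P) h
    rw [hχU, hχD] at this
    linarith
  have hmid := (strictConcaveOn_headwindOfSqAirSpeed hc hk hP.le).lt_midpoint_of_add_eq_two_mul
    (monotoneOn_headwindOfSqAirSpeed hc hk hP.le) (mem_Ioi.2 (by positivity)) hB2
    (mem_Ioi.2 (pow_pos hVbar 2)) hne (by rw [hχU, hχD, hχ0]; ring)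
  exact harmonic_mean_lt_of_two_mul_sq_lt hk hP hVU hVD0 hVbar hU hD rfl (by linarith)
end
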